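/- If (C, A) is detectable, [U W]^{-1}A[U W] = diag(F, G) with F having purely imaginary semisimple eigenvalues and G Hurwitz, P is symmetric positive definite with PF + FᵀP = 0, and H := CUP^{-1/2}, S := P^{1/2}FP^{-1/2}, then the pair (H, S) is observable. -/

import Mathlib

open Matrix NormedSpace Filter

/-!
With `S = R F R⁻¹` and `K = U R⁻¹`, the Lyapunov equation makes `S` skew-symmetric, so
`exp (t • S)` is orthogonal, and `A K = K S` gives `exp (t • A) K = K exp (t • S)`.
If `H S^k v = 0` for `k < n₁`, Cayley–Hamilton gives `H exp (t • S) v = 0` for all `t`, i.e.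
`C exp (t • A) (K v) = 0`. Detectability forces `exp (t • A) (K v) → 0`, hence
`exp (t • S) v → 0` after applying a left inverse of `K`; as `exp (t • S)` preserves the
Euclidean norm, `v = 0`.
-/

theorem NormedSpace.map_exp_eq_zero_of_map_pow_eq_zero {𝕂 𝔸 E : Type*} [Field 𝕂] [CharZero 𝕂]
    [Ring 𝔸] [Algebra 𝕂 𝔸] [TopologicalSpace 𝔸] [IsTopologicalRing 𝔸]
    [AddCommGroup E] [Module 𝕂 E] [TopologicalSpace E] [T2Space E]
    (Φ : 𝔸 →L[𝕂] E) {x : 𝔸} (h : ∀ k, Φ (x ^ k) = 0) : Φ (exp x) = 0 := by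
  rw [congrFun (exp_eq_tsum 𝕂) x]
  by_cases hs : Summable fun k : ℕ => (k.factorial⁻¹ : 𝕂) • x ^ k
  · simp [Φ.map_tsum hs, h]
  -- the junk value `0` of a divergent `tsum` makes this case trivial, so no norm is needed
  · rw [tsum_eq_zero_of_not_summable hs, map_zero]

namespace Matrix

theorem map_pow_eq_zero_of_forall_lt_card {R ι E : Type*} [CommRing R] [Nontrivial R]
    [Fintype ι] [DecidableEq ι] [AddCommGroup E] [Module R E]
    (Φ : Matrix ι ι R →ₗ[R] E) (M : Matrix ι ι R) (h : ∀ k < Fintype.card ι, Φ (M ^ k) = 0)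
    (k : ℕ) : Φ (M ^ k) = 0 := by
  rcases isEmpty_or_nonempty ι with hι | hι
  · rw [Subsingleton.elim (M ^ k) 0, map_zero]
  have hdeg : (Polynomial.X ^ k %ₘ M.charpoly).natDegree < Fintype.card ι := by
    rw [← M.charpoly_natDegree_eq_dim]
    refine Polynomial.natDegree_modByMonic_lt _ M.charpoly_monic fun h1 => ?_
    exact Fintype.card_ne_zero (by rw [← M.charpoly_natDegree_eq_dim, h1, Polynomial.natDegree_one])
  rw [pow_eq_aeval_mod_charpoly, Polynomial.aeval_eq_sum_range' hdeg, map_sum]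
  exact Finset.sum_eq_zero fun i hi => by rw [map_smul, h i (Finset.mem_range.mp hi), smul_zero]

theorem mulVec_exp_smul_mulVec_eq_zero {𝕂 ι κ : Type*} [RCLike 𝕂] [Fintype ι] [DecidableEq ι]
    {H : Matrix κ ι 𝕂} {S : Matrix ι ι 𝕂} {v : ι → 𝕂}
    (h : ∀ k < Fintype.card ι, H *ᵥ (S ^ k *ᵥ v) = 0) (t : 𝕂) :
    H *ᵥ (exp (t • S) *ᵥ v) = 0 := by
  let Φ : Matrix ι ι 𝕂 →ₗ[𝕂] κ → 𝕂 :=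
    { toFun := fun N => H *ᵥ (N *ᵥ v)
      map_add' := fun N N' => by simp only [add_mulVec, mulVec_add]
      map_smul' := fun c N => by simp only [smul_mulVec, mulVec_smul, RingHom.id_apply] }
  have hpow := map_pow_eq_zero_of_forall_lt_card Φ S h
  refine map_exp_eq_zero_of_map_pow_eq_zero (LinearMap.toContinuousLinearMap Φ) fun k => ?_
  simp only [LinearMap.coe_toContinuousLinearMap', smul_pow, map_smul, hpow, smul_zero]

theorem exp_mul_eq_mul_exp_of_mul_eq {𝕂 m p : Type*} [RCLike 𝕂] [Fintype m]
    [DecidableEq m] [Fintype p] [DecidableEq p] {A : Matrix m m 𝕂} {B : Matrix p p 𝕂}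
    {X : Matrix m p 𝕂} (h : A * X = X * B) : exp A * X = X * exp B := by
  have hpow (k : ℕ) : A ^ k * X = X * B ^ k := by
    induction k with
    | zero => simp
    | succ k ih => rw [pow_succ, pow_succ, Matrix.mul_assoc, h, ← Matrix.mul_assoc, ih,
        Matrix.mul_assoc]
  have hA : HasSum (fun k => ((k.factorial⁻¹ : 𝕂) • A ^ k) * X) (exp A * X) := by
    open scoped Matrix.Norms.Operator in
    exact (exp_series_hasSum_exp' A).map (mulRightLinearMap m 𝕂 X)
      (continuous_id.matrix_mul continuous_const)
  have hB : HasSum (fun k => X * ((k.factorial⁻¹ : 𝕂) • B ^ k)) (X * exp B) := by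
    open scoped Matrix.Norms.Operator in
    exact (exp_series_hasSum_exp' B).map (mulLeftLinearMap p 𝕂 X)
      (continuous_const.matrix_mul continuous_id)
  refine hA.unique ?_
  simpa only [Matrix.smul_mul, Matrix.mul_smul, hpow] using hB

theorem transpose_conj_eq_neg_of_lyapunov_eq_zero {R n : Type*} [CommRing R] [Fintype n]
    [DecidableEq n] {Q F : Matrix n n R} (hQ : Qᵀ = Q) (hdet : IsUnit Q.det)
    (h : Q * Q * F + Fᵀ * (Q * Q) = 0) : (Q * F * Q⁻¹)ᵀ = -(Q * F * Q⁻¹) := by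
  have hF : Fᵀ * (Q * Q) = -(Q * Q * F) := eq_neg_of_add_eq_zero_right h
  calc (Q * F * Q⁻¹)ᵀ = Q⁻¹ * (Fᵀ * (Q * Q)) * Q⁻¹ := by
        rw [transpose_mul, transpose_mul, transpose_nonsing_inv, hQ]
        simp only [Matrix.mul_assoc, Matrix.mul_nonsing_inv _ hdet, Matrix.mul_one]
    _ = -(Q * F * Q⁻¹) := by
        rw [hF]
        simp only [Matrix.mul_neg, Matrix.neg_mul, Matrix.mul_assoc,
          Matrix.nonsing_inv_mul_cancel_left _ _ hdet]

theorem transpose_exp_mul_exp_of_transpose_eq_neg {m : Type*} [Fintype m] [DecidableEq m]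
    {S : Matrix m m ℝ} (hS : Sᵀ = -S) : (exp S)ᵀ * exp S = 1 := by
  rw [← exp_transpose, hS, ← exp_add_of_commute _ _ (Commute.refl S).neg_left, neg_add_cancel,
    exp_zero]

theorem eq_zero_of_tendsto_mulVec_of_transpose_mul_self_eq_one {α ι : Type*} [Fintype ι]
    [DecidableEq ι] {l : Filter α} [l.NeBot] {Q : α → Matrix ι ι ℝ}
    (hQ : ∀ a, (Q a)ᵀ * Q a = 1) {v : ι → ℝ}
    (h : Tendsto (fun a => Q a *ᵥ v) l (nhds 0)) : v = 0 := by
  have hdot (a : α) : (Q a *ᵥ v) ⬝ᵥ (Q a *ᵥ v) = v ⬝ᵥ v := by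
    nth_rewrite 1 [← vecMul_transpose]
    rw [← dotProduct_mulVec, mulVec_mulVec, hQ, one_mulVec]
  have hlim := ((continuous_id.dotProduct continuous_id).tendsto 0).comp h
  simp only [Function.comp_def, id, hdot, dotProduct_zero] at hlim
  exact dotProduct_self_eq_zero.mp (tendsto_const_nhds_iff.mp hlim)

theorem mul_eq_mul_of_conj_fromCols_eq_fromBlocks {R l m n : Type*} [Semiring R]
    [Fintype l] [Fintype m] [Fintype n] [DecidableEq n]
    {A : Matrix n n R} {U : Matrix n l R} {W : Matrix n m R} {V : Matrix (l ⊕ m) n R}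
    {F : Matrix l l R} {G : Matrix m m R}
    (hV : fromCols U W * V = 1) (h : V * A * fromCols U W = fromBlocks F 0 0 G) :
    A * U = U * F := by
  have hT : A * fromCols U W = fromCols U W * fromBlocks F 0 0 G := by
    rw [← h, ← Matrix.mul_assoc, ← Matrix.mul_assoc, hV, Matrix.one_mul]
  rw [mul_fromCols, fromCols_mul_fromBlocks] at hT
  simpa using (fromCols_inj hT).1

theorem toRows₁_mul_eq_one_of_mul_fromCols_eq_one {R l m n : Type*} [Semiring R]
    [Fintype n] [DecidableEq l] [DecidableEq m]
    {U : Matrix n l R} {W : Matrix n m R} {V : Matrix (l ⊕ m) n R}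
    (h : V * fromCols U W = 1) : V.toRows₁ * U = 1 := by
  rw [← fromRows_toRows V, fromRows_mul_fromCols, ← fromBlocks_one] at h
  exact (fromBlocks_inj.mp h).1

end Matrix

theorem stmt19_general {n n₁ n₂ m : ℕ} (A : Matrix (Fin n) (Fin n) ℝ) (C : Matrix (Fin m) (Fin n) ℝ)
    (hdet : ∀ v : Fin n → ℝ,
      (∀ t : ℝ, 0 ≤ t → C *ᵥ (NormedSpace.exp (t • A) *ᵥ v) = 0) →
        Tendsto (fun t : ℝ => NormedSpace.exp (t • A) *ᵥ v) atTop (nhds 0))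
    (U : Matrix (Fin n) (Fin n₁) ℝ) (W : Matrix (Fin n) (Fin n₂) ℝ)
    (V : Matrix (Fin n₁ ⊕ Fin n₂) (Fin n) ℝ)
    (hVinv : V * fromCols U W = 1) (hinvV : fromCols U W * V = 1)
    (F : Matrix (Fin n₁) (Fin n₁) ℝ) (G : Matrix (Fin n₂) (Fin n₂) ℝ)
    (hblock : V * A * fromCols U W = fromBlocks F 0 0 G)
    (P : Matrix (Fin n₁) (Fin n₁) ℝ) (hlyap : P * F + Fᵀ * P = 0)
    (R : Matrix (Fin n₁) (Fin n₁) ℝ) (hR : R.PosDef) (hRR : R * R = P) :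
    ∀ v : Fin n₁ → ℝ,
      (∀ k < n₁, (C * U * R⁻¹) *ᵥ ((R * F * R⁻¹) ^ k *ᵥ v) = 0) → v = 0 := by
  intro v hv
  set S := R * F * R⁻¹
  set K := U * R⁻¹
  have hRdet : IsUnit R.det := isUnit_iff_ne_zero.mpr hR.det_pos.ne'
  have hRsymm : Rᵀ = R := by simpa using hR.isHermitian.eq
  have hS : Sᵀ = -S := transpose_conj_eq_neg_of_lyapunov_eq_zero hRsymm hRdet (hRR ▸ hlyap)
  have hAK : A * K = K * S := by
    rw [← Matrix.mul_assoc, mul_eq_mul_of_conj_fromCols_eq_fromBlocks hinvV hblock]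
    simp only [S, K, Matrix.mul_assoc, Matrix.nonsing_inv_mul_cancel_left _ _ hRdet]
  have hLK : R * V.toRows₁ * K = 1 := by
    rw [Matrix.mul_assoc, ← Matrix.mul_assoc V.toRows₁,
      toRows₁_mul_eq_one_of_mul_fromCols_eq_one hVinv, Matrix.one_mul,
      Matrix.mul_nonsing_inv _ hRdet]
  have hexp (t : ℝ) : exp (t • A) *ᵥ (K *ᵥ v) = K *ᵥ (exp (t • S) *ᵥ v) := by
    rw [mulVec_mulVec, exp_mul_eq_mul_exp_of_mul_eq (A := t • A) (B := t • S)
      (by rw [Matrix.smul_mul, hAK, Matrix.mul_smul]), ← mulVec_mulVec]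
  have hunobs (t : ℝ) : (C * K) *ᵥ (exp (t • S) *ᵥ v) = 0 := by
    rw [← Matrix.mul_assoc]
    exact mulVec_exp_smul_mulVec_eq_zero (by simpa only [Fintype.card_fin] using hv) t
  have hdecay := hdet (K *ᵥ v) fun t _ => by rw [hexp, mulVec_mulVec]; exact hunobs t
  have hleft (t : ℝ) : (R * V.toRows₁) *ᵥ (exp (t • A) *ᵥ (K *ᵥ v)) = exp (t • S) *ᵥ v := by
    rw [hexp, mulVec_mulVec, hLK, one_mulVec]
  have hlim : Tendsto (fun t : ℝ => exp (t • S) *ᵥ v) atTop (nhds 0) := by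
    have hcont : Continuous fun x : Fin n → ℝ => (R * V.toRows₁) *ᵥ x :=
      continuous_const.matrix_mulVec continuous_id
    exact ((hcont.tendsto' 0 0 (mulVec_zero _)).comp hdecay).congr hleft
  exact eq_zero_of_tendsto_mulVec_of_transpose_mul_self_eq_one
    (fun t => transpose_exp_mul_exp_of_transpose_eq_neg (by rw [transpose_smul, hS, smul_neg]))
    hlim

/-- If (C,A) is detectable, [U W]⁻¹A[U W] = diag(F,G) with F purely imaginary semisimple
and G Hurwitz, PF + FᵀP = 0 with P symmetric positive definite, R = P^{1/2}, then the pair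
(H, S) = (C U R⁻¹, R F R⁻¹) is observable. -/
theorem stmt19 {n n₁ n₂ m : ℕ} (A : Matrix (Fin n) (Fin n) ℝ) (C : Matrix (Fin m) (Fin n) ℝ)
    (hdet : ∀ v : Fin n → ℝ,
      (∀ t : ℝ, 0 ≤ t → C *ᵥ (NormedSpace.exp (t • A) *ᵥ v) = 0) →
        Tendsto (fun t : ℝ => NormedSpace.exp (t • A) *ᵥ v) atTop (nhds 0))
    (U : Matrix (Fin n) (Fin n₁) ℝ) (W : Matrix (Fin n) (Fin n₂) ℝ)
    (V : Matrix (Fin n₁ ⊕ Fin n₂) (Fin n) ℝ)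
    (hVinv : V * fromCols U W = 1) (hinvV : fromCols U W * V = 1)
    (F : Matrix (Fin n₁) (Fin n₁) ℝ) (G : Matrix (Fin n₂) (Fin n₂) ℝ)
    (hblock : V * A * fromCols U W = fromBlocks F 0 0 G)
    (hF : ∀ μ ∈ spectrum ℂ (F.map Complex.ofReal), μ.re = 0)
    (hFsemisimple : ∀ μ ∈ spectrum ℂ (F.map Complex.ofReal),
      ∀ v : Fin n₁ → ℂ,
        (F.map Complex.ofReal - μ • 1) *ᵥ ((F.map Complex.ofReal - μ • 1) *ᵥ v) = 0 →
          (F.map Complex.ofReal - μ • 1) *ᵥ v = 0)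
    (hG : ∀ μ ∈ spectrum ℂ (G.map Complex.ofReal), μ.re < 0)
    (P : Matrix (Fin n₁) (Fin n₁) ℝ) (hP : P.PosDef) (hlyap : P * F + Fᵀ * P = 0)
    (R : Matrix (Fin n₁) (Fin n₁) ℝ) (hR : R.PosDef) (hRR : R * R = P) :
    ∀ v : Fin n₁ → ℝ,
      (∀ k < n₁, (C * U * R⁻¹) *ᵥ ((R * F * R⁻¹) ^ k *ᵥ v) = 0) → v = 0 :=
  stmt19_general A C hdet U W V hVinv hinvV F G hblock P hlyap R hR hRR
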